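/- Let d ≥ 1, let C : ℝ^d → ℝ be continuous with 0 < C(0) and |C(x)| ≤ C(0) for all x, and let ℓ_C > 0 be such that C(x) > 0 whenever |x|_∞ ≤ ℓ_C/2. Then the Wegner constant W(E) satisfies lim_{E → +∞} W(E)/E^{d/2} = 3^d e^{1/(2π)} / √(2π C(0)). -/

import Mathlib

open MeasureTheory Real

/-- The length `ℓ_E := min{|E|^{-1/2}, ℓ_C}`. -/
noncomputable def ellE (ℓC E : ℝ) : ℝ := min (|E| ^ (-(1 : ℝ) / 2)) ℓC

/-- `b_E := inf{C(x)/C(0) : |x|_∞ < ℓ_E/2}`. -/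
noncomputable def bE (d : ℕ) (C : (Fin d → ℝ) → ℝ) (ℓC E : ℝ) : ℝ :=
  sInf {r : ℝ | ∃ x : Fin d → ℝ, ‖x‖ < ellE ℓC E / 2 ∧ r = C x / C 0}

/-- `C_E := C(0)(2 - b_E²)`. -/
noncomputable def CE (d : ℕ) (C : (Fin d → ℝ) → ℝ) (ℓC E : ℝ) : ℝ :=
  C 0 * (2 - (bE d C ℓC E) ^ 2)

/-- `t_E := (2C_E)^{-1}(-E + √(E² + 2C_E/π))`. -/
noncomputable def tE (d : ℕ) (C : (Fin d → ℝ) → ℝ) (ℓC E : ℝ) : ℝ :=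
  (2 * CE d C ℓC E)⁻¹ * (-E + Real.sqrt (E ^ 2 + 2 * CE d C ℓC E / Real.pi))

/-- The Wegner constant
`W(E) := exp(t_E E + t_E² C_E/2)/(√(2π C(0)) b_E) · (2/ℓ_E + (2π t_E)^{-1/2})^d`. -/
noncomputable def wegnerW (d : ℕ) (C : (Fin d → ℝ) → ℝ) (ℓC E : ℝ) : ℝ :=
  Real.exp (tE d C ℓC E * E + (tE d C ℓC E) ^ 2 * CE d C ℓC E / 2) /
      (Real.sqrt (2 * Real.pi * C 0) * bE d C ℓC E) *
    (2 / ellE ℓC E + (2 * Real.pi * tE d C ℓC E) ^ (-(1 : ℝ) / 2)) ^ d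

/-!
`t_E` is the positive root of `C_E t² + E t = 1/(2π)`, so `t_E ≤ 1/(2πE) → 0` once `C_E > 0`.
Continuity of `C` at `0` forces `b_E → 1`, hence `C_E → C(0)`, `t_E² C_E → 0` and
`t_E E → 1/(2π)`. For large `E` we have `ℓ_E = E^{-1/2}`, so the bracket of `W(E)` divided by
`E^{1/2}` is `2 + (2π t_E E)^{-1/2} → 3`.
-/

open Filter Topology

theorem tendsto_sInf_image_ball {X α : Type*} [PseudoMetricSpace X] {g : X → ℝ} {x₀ : X}
    (hg : ContinuousAt g x₀) {l : Filter α} {r : α → ℝ} (hr : Tendsto r l (𝓝[>] 0)) :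
    Tendsto (fun i => sInf (g '' Metric.ball x₀ (r i))) l (𝓝 (g x₀)) := by
  rw [Metric.tendsto_nhds]
  intro ε hε
  obtain ⟨δ, hδ, hgδ⟩ := Metric.continuousAt_iff.1 hg (ε / 2) (half_pos hε)
  filter_upwards [hr (Ioo_mem_nhdsGT hδ)] with i ⟨hr0, hrδ⟩
  have hsub : g '' Metric.ball x₀ (r i) ⊆ Set.Icc (g x₀ - ε / 2) (g x₀ + ε / 2) := by
    rintro _ ⟨x, hx, rfl⟩
    have hgx := hgδ (lt_trans (Metric.mem_ball.1 hx) hrδ)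
    rw [Real.dist_eq, abs_lt] at hgx
    constructor <;> linarith
  have hmem : g x₀ ∈ g '' Metric.ball x₀ (r i) := Set.mem_image_of_mem g (Metric.mem_ball_self hr0)
  have hlow : g x₀ - ε / 2 ≤ sInf (g '' Metric.ball x₀ (r i)) :=
    le_csInf ⟨_, hmem⟩ fun y hy => (hsub hy).1
  have hup : sInf (g '' Metric.ball x₀ (r i)) ≤ g x₀ :=
    csInf_le ⟨_, fun y hy => (hsub hy).1⟩ hmem
  rw [Real.dist_eq, abs_lt]
  constructor <;> linarith

section WegnerConstant

variable {d : ℕ} {C : (Fin d → ℝ) → ℝ} {ℓC : ℝ}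

theorem tendsto_rpow_neg_half_atTop : Tendsto (fun E : ℝ => E ^ (-(1 : ℝ) / 2)) atTop (𝓝[>] 0) :=
  tendsto_nhdsWithin_iff.2
    ⟨by simpa only [neg_div] using tendsto_rpow_neg_atTop (y := 1 / 2) (by norm_num),
      (eventually_gt_atTop 0).mono fun _ hE => Real.rpow_pos_of_pos hE _⟩

theorem ellE_eventuallyEq (hℓC : 0 < ℓC) : ellE ℓC =ᶠ[atTop] fun E => E ^ (-(1 : ℝ) / 2) := by
  filter_upwards [(tendsto_rpow_neg_half_atTop.mono_right nhdsWithin_le_nhds).eventually_le_const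
    hℓC, eventually_gt_atTop 0] with E hle hE
  rw [ellE, abs_of_pos hE, min_eq_left hle]

theorem tendsto_ellE (hℓC : 0 < ℓC) : Tendsto (ellE ℓC) atTop (𝓝[>] 0) :=
  tendsto_rpow_neg_half_atTop.congr' (ellE_eventuallyEq hℓC).symm

theorem bE_eq_sInf_image (E : ℝ) :
    bE d C ℓC E = sInf ((fun x => C x / C 0) '' Metric.ball 0 (ellE ℓC E / 2)) := by
  simp only [bE, Set.image, mem_ball_zero_iff, eq_comm]

theorem tendsto_bE (hC : ContinuousAt C 0) (hC0 : C 0 ≠ 0) (hℓC : 0 < ℓC) :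
    Tendsto (bE d C ℓC) atTop (𝓝 1) := by
  have hr : Tendsto (fun E => ellE ℓC E / 2) atTop (𝓝[>] 0) := by
    obtain ⟨hℓ, hℓpos⟩ := tendsto_nhdsWithin_iff.1 (tendsto_ellE hℓC)
    refine tendsto_nhdsWithin_iff.2 ⟨by simpa using hℓ.div_const 2, ?_⟩
    exact hℓpos.mono fun _ h => Set.mem_Ioi.2 (half_pos h)
  have h := tendsto_sInf_image_ball (hC.div_const (C 0)) hr
  rw [div_self hC0] at h
  exact h.congr fun E => (bE_eq_sInf_image E).symm

theorem tendsto_CE (hC : ContinuousAt C 0) (hC0 : C 0 ≠ 0) (hℓC : 0 < ℓC) :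
    Tendsto (CE d C ℓC) atTop (𝓝 (C 0)) := by
  have h := (tendsto_const_nhds (x := C 0)).mul
    ((tendsto_const_nhds (x := (2 : ℝ))).sub ((tendsto_bE hC hC0 hℓC).pow 2))
  norm_num at h
  exact h

theorem eventually_CE_pos (hC : ContinuousAt C 0) (hC0 : 0 < C 0) (hℓC : 0 < ℓC) :
    ∀ᶠ E in atTop, 0 < CE d C ℓC E :=
  (tendsto_CE hC hC0.ne' hℓC).eventually (eventually_gt_nhds hC0)

theorem tE_pos {E : ℝ} (hCE : 0 < CE d C ℓC E) : 0 < tE d C ℓC E := by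
  have hE : E < √(E ^ 2 + 2 * CE d C ℓC E / π) :=
    (le_abs_self E).trans_lt (Real.sqrt_sq_eq_abs E ▸
      Real.sqrt_lt_sqrt (sq_nonneg E) (by linarith [div_pos (mul_pos two_pos hCE) pi_pos]))
  exact mul_pos (by positivity) (by linarith)

theorem tE_mul_add_sq_mul_CE {E : ℝ} (hCE : 0 < CE d C ℓC E) :
    tE d C ℓC E * E + tE d C ℓC E ^ 2 * CE d C ℓC E = 1 / (2 * π) := by
  have hs := Real.sq_sqrt (by positivity : 0 ≤ E ^ 2 + 2 * CE d C ℓC E / π)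
  rw [tE]
  generalize √(E ^ 2 + 2 * CE d C ℓC E / π) = s at hs
  have hsπ : s ^ 2 * π = E ^ 2 * π + 2 * CE d C ℓC E := by
    rw [hs]
    field_simp
  have hc := hCE.ne'
  field_simp
  linear_combination hsπ

theorem tendsto_tE (hC : ContinuousAt C 0) (hC0 : 0 < C 0) (hℓC : 0 < ℓC) :
    Tendsto (tE d C ℓC) atTop (𝓝 0) := by
  have hCE := eventually_CE_pos hC hC0 hℓC
  refine squeeze_zero' (hCE.mono fun E h => (tE_pos h).le) ?_
    ((tendsto_const_nhds (x := 1 / (2 * π))).div_atTop tendsto_id)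
  filter_upwards [hCE, eventually_gt_atTop 0] with E h hE
  simp only [id]
  rw [le_div_iff₀ hE, ← tE_mul_add_sq_mul_CE h]
  have := mul_nonneg (sq_nonneg (tE d C ℓC E)) h.le
  linarith

theorem tendsto_sq_tE_mul_CE (hC : ContinuousAt C 0) (hC0 : 0 < C 0) (hℓC : 0 < ℓC) :
    Tendsto (fun E => tE d C ℓC E ^ 2 * CE d C ℓC E) atTop (𝓝 0) := by
  simpa using ((tendsto_tE hC hC0 hℓC).pow 2).mul (tendsto_CE hC hC0.ne' hℓC)

theorem tendsto_tE_mul_self (hC : ContinuousAt C 0) (hC0 : 0 < C 0) (hℓC : 0 < ℓC) :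
    Tendsto (fun E => tE d C ℓC E * E) atTop (𝓝 (1 / (2 * π))) := by
  have h := (tendsto_const_nhds (x := 1 / (2 * π))).sub (tendsto_sq_tE_mul_CE hC hC0 hℓC)
  rw [sub_zero] at h
  refine h.congr' ?_
  filter_upwards [eventually_CE_pos hC hC0 hℓC] with E hpos
  linarith [tE_mul_add_sq_mul_CE hpos]

theorem wegnerW_div_rpow_eq {E : ℝ} (hE : 0 < E) (hℓ : ellE ℓC E = E ^ (-(1 : ℝ) / 2))
    (ht : 0 ≤ tE d C ℓC E) :
    wegnerW d C ℓC E / E ^ ((d : ℝ) / 2) =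
      exp (tE d C ℓC E * E + tE d C ℓC E ^ 2 * CE d C ℓC E / 2) /
          (√(2 * π * C 0) * bE d C ℓC E) *
        (2 + (2 * π * (tE d C ℓC E * E)) ^ (-(1 : ℝ) / 2)) ^ d := by
  have hroot : E ^ ((d : ℝ) / 2) = (E ^ ((1 : ℝ) / 2)) ^ d := by
    rw [← Real.rpow_natCast, ← Real.rpow_mul hE.le]
    ring_nf
  have hinv : E ^ (-(1 : ℝ) / 2) = (E ^ ((1 : ℝ) / 2))⁻¹ := by
    rw [neg_div, Real.rpow_neg hE.le]
  have hsplit : (2 * π * (tE d C ℓC E * E)) ^ (-(1 : ℝ) / 2) =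
      (2 * π * tE d C ℓC E) ^ (-(1 : ℝ) / 2) * E ^ (-(1 : ℝ) / 2) := by
    rw [← mul_assoc, Real.mul_rpow (by positivity) hE.le]
  have hpos : 0 < E ^ ((1 : ℝ) / 2) := Real.rpow_pos_of_pos hE _
  rw [wegnerW, hℓ, hsplit, hinv, hroot, mul_div_assoc, ← div_pow]
  congr 2
  field_simp

end WegnerConstant

theorem wegner_constant_high_energy_asymptotics_general
    (d : ℕ) (C : (Fin d → ℝ) → ℝ) (hC : Continuous C)
    (hC0pos : 0 < C 0)
    (ℓC : ℝ) (hℓC : 0 < ℓC) :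
    Filter.Tendsto (fun E : ℝ => wegnerW d C ℓC E / E ^ ((d : ℝ) / 2))
      Filter.atTop
      (nhds ((3 : ℝ) ^ d * Real.exp (1 / (2 * Real.pi)) / Real.sqrt (2 * Real.pi * C 0))) := by
  have hC₀ : ContinuousAt C 0 := hC.continuousAt
  have htE := tendsto_tE_mul_self hC₀ hC0pos hℓC
  have hexp : Tendsto (fun E => exp (tE d C ℓC E * E + tE d C ℓC E ^ 2 * CE d C ℓC E / 2) /
      (√(2 * π * C 0) * bE d C ℓC E)) atTop (𝓝 (exp (1 / (2 * π)) / √(2 * π * C 0))) := by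
    have h := (htE.add ((tendsto_sq_tE_mul_CE hC₀ hC0pos hℓC).div_const 2)).rexp.div
      ((tendsto_const_nhds (x := √(2 * π * C 0))).mul (tendsto_bE hC₀ hC0pos.ne' hℓC))
      (by positivity)
    rw [zero_div, add_zero, mul_one] at h
    exact h
  have hbracket : Tendsto (fun E => (2 + (2 * π * (tE d C ℓC E * E)) ^ (-(1 : ℝ) / 2)) ^ d)
      atTop (𝓝 (3 ^ d)) := by
    have h := ((tendsto_const_nhds (x := 2 * π)).mul htE).rpow_const (p := -(1 : ℝ) / 2)
      (Or.inl (by positivity))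
    rw [mul_one_div_cancel (by positivity), Real.one_rpow] at h
    have h3 := ((tendsto_const_nhds (x := (2 : ℝ))).add h).pow d
    rwa [two_add_one_eq_three] at h3
  rw [show (3 : ℝ) ^ d * exp (1 / (2 * π)) / √(2 * π * C 0) =
    exp (1 / (2 * π)) / √(2 * π * C 0) * 3 ^ d by ring]
  refine (hexp.mul hbracket).congr' ?_
  filter_upwards [eventually_gt_atTop 0, ellE_eventuallyEq hℓC,
    eventually_CE_pos hC₀ hC0pos hℓC] with E hE hℓ hc
  rw [wegnerW_div_rpow_eq hE hℓ (tE_pos hc).le]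

/-- High-energy asymptotics of the Wegner constant:
`lim_{E → +∞} W(E)/E^{d/2} = 3^d e^{1/(2π)} / √(2π C(0))`. -/
theorem wegner_constant_high_energy_asymptotics
    (d : ℕ) (hd : 1 ≤ d) (C : (Fin d → ℝ) → ℝ) (hC : Continuous C)
    (hC0pos : 0 < C 0) (hCbd : ∀ x, |C x| ≤ C 0)
    (ℓC : ℝ) (hℓC : 0 < ℓC)
    (hCpos : ∀ x : Fin d → ℝ, ‖x‖ ≤ ℓC / 2 → 0 < C x) :
    Filter.Tendsto (fun E : ℝ => wegnerW d C ℓC E / E ^ ((d : ℝ) / 2))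
      Filter.atTop
      (nhds ((3 : ℝ) ^ d * Real.exp (1 / (2 * Real.pi)) / Real.sqrt (2 * Real.pi * C 0))) :=
  wegner_constant_high_energy_asymptotics_general d C hC hC0pos ℓC hℓC
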